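/- Let Λ be the roots of E₈ with α₈-coefficient 1 and δ the highest root of E₈. For λ ∈ Λ, let {λ}^⊥ = {μ ∈ Λ : (λ,μ) = 0}. Then |{λ}^⊥| = 27, and for any two distinct orthogonal weights ρ, σ ∈ {λ}^⊥ with (ρ,σ)=0, there is exactly one weight τ ∈ {λ}^⊥ orthogonal to both ρ and σ. -/

import Mathlib

open Finset

/-- Ambient 8-dimensional rational space in which E₈ is realized. -/
abbrev V8 : Type := Fin 8 → ℚ

/-- The standard inner product on `V8`; roots of E₈ have squared length 2 in it. -/
def stdInner (x y : V8) : ℚ := ∑ i, x i * y i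

/-- The inner product normalized so that all roots of E₈ have length 1. -/
def nip (x y : V8) : ℚ := stdInner x y / 2

/-- `v` is a root of E₈ in the standard coordinate realization:
either all coordinates are integers, or all are half-odd-integers;
the squared length is 2 and the coordinate sum is an even integer. -/
def IsE8Root (v : V8) : Prop :=
  stdInner v v = 2 ∧
  ((∀ i, ∃ n : ℤ, v i = n) ∨ (∀ i, ∃ n : ℤ, v i = n + 1/2)) ∧
  (∃ n : ℤ, (∑ i, v i) = 2 * n)

/-- The simple roots α₁,…,α₈ of E₈ in Bourbaki numbering (index `i` is αᵢ₊₁). -/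
def simpleRoot : Fin 8 → V8 :=
  ![![1/2, -1/2, -1/2, -1/2, -1/2, -1/2, -1/2, 1/2],
    ![1, 1, 0, 0, 0, 0, 0, 0],
    ![-1, 1, 0, 0, 0, 0, 0, 0],
    ![0, -1, 1, 0, 0, 0, 0, 0],
    ![0, 0, -1, 1, 0, 0, 0, 0],
    ![0, 0, 0, -1, 1, 0, 0, 0],
    ![0, 0, 0, 0, -1, 1, 0, 0],
    ![0, 0, 0, 0, 0, -1, 1, 0]]

/-- `c` is the coordinate vector of `v` in the basis of simple roots of E₈. -/
def HasCoords (v : V8) (c : Fin 8 → ℚ) : Prop := v = ∑ i, c i • simpleRoot i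

/-- The set Λ of roots of E₈ whose α₈-coefficient equals 1
(the weights of the 56-dimensional representation of E₇). -/
def LambdaE7 : Set V8 := {v | IsE8Root v ∧ ∃ c, HasCoords v c ∧ c 7 = 1}

/-- E₇ embedded in E₈ as the set of roots with α₈-coefficient 0. -/
def E7 : Set V8 := {v | IsE8Root v ∧ ∃ c, HasCoords v c ∧ c 7 = 0}

/-- The highest root δ of E₈ (equal to e₇ + e₈ in standard coordinates). -/
def deltaE8 : V8 := ![0, 0, 0, 0, 0, 0, 1, 1]

/-- For a root α of E₇, the maximal square Ω(α) = {λ ∈ Λ : λ − α ∈ Λ}. -/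
def Omega (a : V8) : Set V8 := {l | l ∈ LambdaE7 ∧ l - a ∈ LambdaE7}

/-!
Λ is the set of roots `v` with `⟨v, δ⟩ = 1`, and it has 56 elements: every root has all
coordinates in `{-1, 0, 1}` or all in `{±1/2}`, which leaves a finite enumeration.
In the normalization where roots have squared length 2, the inner product of two vectors of the
E₈ lattice is an integer, so for `l, m ∈ Λ` both `⟨l, m⟩` and `⟨l, δ - m⟩ = 1 - ⟨l, m⟩` are integers
at most 2: `⟨l, m⟩ ∈ {-1, 0, 1, 2}`, the value 2 only for `m = l`. The involution `m ↦ δ - m` of Λ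
exchanges the values `a` and `1 - a`, so `56 = 2 + 2 |{l}^⊥|`.

If `l, r, s ∈ Λ` are pairwise orthogonal, `τ = 2δ - l - r - s` is a lattice vector with
`⟨τ, τ⟩ = 2` and `⟨τ, δ⟩ = 1`, orthogonal to `l, r, s`. Conversely any `t ∈ Λ` orthogonal to
`l, r, s` has `⟨t, τ⟩ = 2`, which forces `t = τ`.
-/

lemma stdInner_eq_dotProduct (x y : V8) : stdInner x y = x ⬝ᵥ y := rfl

lemma nip_eq_zero_iff {x y : V8} : nip x y = 0 ↔ stdInner x y = 0 := by
  simp [nip]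

section Bilinear

variable (x y z : V8)

lemma stdInner_comm : stdInner x y = stdInner y x := dotProduct_comm x y

lemma stdInner_sub_left : stdInner (x - y) z = stdInner x z - stdInner y z := sub_dotProduct x y z

lemma stdInner_sub_right : stdInner x (y - z) = stdInner x y - stdInner x z :=
  dotProduct_sub x y z

lemma stdInner_nsmul_right (n : ℕ) : stdInner x (n • y) = n * stdInner x y := by
  rw [stdInner_eq_dotProduct, dotProduct_smul, nsmul_eq_mul, stdInner_eq_dotProduct]

end Bilinear

section NormTwo

variable {u v : V8}

lemma stdInner_sub_self (hu : stdInner u u = 2) (hv : stdInner v v = 2) :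
    stdInner (u - v) (u - v) = 4 - 2 * stdInner u v := by
  rw [stdInner_sub_left, stdInner_sub_right, stdInner_sub_right, stdInner_comm v u]
  linarith

lemma stdInner_le_two (hu : stdInner u u = 2) (hv : stdInner v v = 2) : stdInner u v ≤ 2 := by
  have := stdInner_sub_self hu hv
  have : 0 ≤ stdInner (u - v) (u - v) := dotProduct_self_star_nonneg _
  linarith

lemma eq_of_stdInner_eq_two (hu : stdInner u u = 2) (hv : stdInner v v = 2)
    (h : stdInner u v = 2) : u = v := by
  have h0 : stdInner (u - v) (u - v) = 0 := by rw [stdInner_sub_self hu hv, h]; norm_num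
  exact sub_eq_zero.mp (dotProduct_self_eq_zero.mp h0)

end NormTwo

def e8Lattice : AddSubgroup V8 where
  carrier := {v | ((∀ i, ∃ n : ℤ, v i = n) ∨ (∀ i, ∃ n : ℤ, v i = n + 1/2)) ∧
    ∃ n : ℤ, ∑ i, v i = 2 * n}
  zero_mem' := ⟨Or.inl fun _ => ⟨0, by simp⟩, 0, by simp⟩
  add_mem' := by
    rintro v w ⟨hv, a, ha⟩ ⟨hw, b, hb⟩
    refine ⟨?_, a + b, by simp [Finset.sum_add_distrib, ha, hb]; ring⟩
    rcases hv with hv | hv <;> rcases hw with hw | hw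
    · refine Or.inl fun i => ?_
      obtain ⟨m, hm⟩ := hv i; obtain ⟨n, hn⟩ := hw i
      exact ⟨m + n, by simp [hm, hn]⟩
    · refine Or.inr fun i => ?_
      obtain ⟨m, hm⟩ := hv i; obtain ⟨n, hn⟩ := hw i
      exact ⟨m + n, by simp [hm, hn]; ring⟩
    · refine Or.inr fun i => ?_
      obtain ⟨m, hm⟩ := hv i; obtain ⟨n, hn⟩ := hw i
      exact ⟨m + n, by simp [hm, hn]; ring⟩
    · refine Or.inl fun i => ?_
      obtain ⟨m, hm⟩ := hv i; obtain ⟨n, hn⟩ := hw i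
      exact ⟨m + n + 1, by simp [hm, hn]; ring⟩
  neg_mem' := by
    rintro v ⟨hv, a, ha⟩
    refine ⟨?_, -a, by simp [ha]⟩
    rcases hv with hv | hv
    · refine Or.inl fun i => ?_
      obtain ⟨m, hm⟩ := hv i
      exact ⟨-m, by simp [hm]⟩
    · refine Or.inr fun i => ?_
      obtain ⟨m, hm⟩ := hv i
      exact ⟨-m - 1, by simp [hm]; ring⟩

lemma isE8Root_iff {v : V8} : IsE8Root v ↔ stdInner v v = 2 ∧ v ∈ e8Lattice := Iff.rfl

lemma deltaE8_mem_e8Lattice : deltaE8 ∈ e8Lattice :=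
  ⟨Or.inl fun i => ⟨![0, 0, 0, 0, 0, 0, 1, 1] i, by fin_cases i <;> simp [deltaE8]⟩, 1,
    by simp [deltaE8, Fin.sum_univ_succ]; norm_num⟩

lemma exists_intCast_eq_stdInner {v w : V8} (hv : v ∈ e8Lattice) (hw : w ∈ e8Lattice) :
    ∃ k : ℤ, stdInner v w = k := by
  obtain ⟨hv | hv, a, ha⟩ := hv <;> obtain ⟨hw | hw, b, hb⟩ := hw <;>
    choose m hm using hv <;> choose n hn using hw <;>
    simp only [stdInner, hm, hn, Finset.sum_add_distrib, Finset.sum_const, Finset.card_univ,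
      Fintype.card_fin] at ha hb ⊢
  · exact ⟨∑ i, m i * n i, by push_cast; rfl⟩
  · refine ⟨∑ i, m i * n i + a, ?_⟩
    simp only [mul_add, Finset.sum_add_distrib, ← Finset.sum_mul, ha]
    push_cast; ring
  · refine ⟨∑ i, m i * n i + b, ?_⟩
    simp only [add_mul, Finset.sum_add_distrib, ← Finset.mul_sum, hb]
    push_cast; ring
  · refine ⟨∑ i, m i * n i + a + b - 2, ?_⟩
    simp only [add_mul, mul_add, Finset.sum_add_distrib, ← Finset.mul_sum,
      ← Finset.sum_mul, Finset.sum_const, Finset.card_univ, Fintype.card_fin]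
    push_cast
    linear_combination (1/2 : ℚ) * ha + (1/2 : ℚ) * hb

lemma stdInner_deltaE8 (v : V8) : stdInner v deltaE8 = v 6 + v 7 := by
  simp [stdInner, deltaE8, Fin.sum_univ_eight]

lemma stdInner_deltaE8_self : stdInner deltaE8 deltaE8 = 2 := by
  simp [stdInner, deltaE8, Fin.sum_univ_succ]; norm_num

def coordsOf (v : V8) : Fin 8 → ℚ :=
  ![2 * v 7,
    (v 0 + v 1 + v 2 + v 3 + v 4 + v 5 + v 6 + 5 * v 7) / 2,
    (-v 0 + v 1 + v 2 + v 3 + v 4 + v 5 + v 6 + 7 * v 7) / 2,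
    v 2 + v 3 + v 4 + v 5 + v 6 + 5 * v 7,
    v 3 + v 4 + v 5 + v 6 + 4 * v 7,
    v 4 + v 5 + v 6 + 3 * v 7,
    v 5 + v 6 + 2 * v 7,
    v 6 + v 7]

lemma hasCoords_coordsOf (v : V8) : HasCoords v (coordsOf v) := by
  funext k
  fin_cases k <;> simp [coordsOf, simpleRoot, Fin.sum_univ_eight] <;> ring

/-- `δ` is orthogonal to `α₁, …, α₇` and `⟨α₈, δ⟩ = 1`. -/
lemma HasCoords.coeff_seven {v : V8} {c : Fin 8 → ℚ} (h : HasCoords v c) :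
    c 7 = stdInner v deltaE8 := by
  subst h
  simp [stdInner_deltaE8, simpleRoot, Fin.sum_univ_eight]
  ring

lemma mem_lambdaE7_iff {v : V8} :
    v ∈ LambdaE7 ↔ stdInner v v = 2 ∧ v ∈ e8Lattice ∧ stdInner v deltaE8 = 1 := by
  rw [← and_assoc, ← isE8Root_iff]
  refine ⟨fun ⟨hv, c, hc, hc7⟩ => ⟨hv, hc.coeff_seven ▸ hc7⟩, fun ⟨hv, hδ⟩ => ⟨hv, coordsOf v,
    hasCoords_coordsOf v, ?_⟩⟩
  rwa [stdInner_deltaE8] at hδ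

lemma deltaE8_sub_mem_lambdaE7 {v : V8} (hv : v ∈ LambdaE7) : deltaE8 - v ∈ LambdaE7 := by
  obtain ⟨hvv, hv, hvδ⟩ := mem_lambdaE7_iff.mp hv
  refine mem_lambdaE7_iff.mpr ⟨?_, sub_mem deltaE8_mem_e8Lattice hv, ?_⟩ <;>
  · simp only [stdInner_sub_left, stdInner_sub_right, stdInner_deltaE8_self,
      stdInner_comm deltaE8 v, hvv, hvδ]
    norm_num

lemma stdInner_mem_of_mem_lambdaE7 {l m : V8} (hl : l ∈ LambdaE7) (hm : m ∈ LambdaE7) :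
    stdInner l m ∈ ({-1, 0, 1, 2} : Finset ℚ) := by
  obtain ⟨hll, hlL, hlδ⟩ := mem_lambdaE7_iff.mp hl
  obtain ⟨hmm, hmL, -⟩ := mem_lambdaE7_iff.mp hm
  obtain ⟨hmm', -, -⟩ := mem_lambdaE7_iff.mp (deltaE8_sub_mem_lambdaE7 hm)
  obtain ⟨k, hk⟩ := exists_intCast_eq_stdInner hlL hmL
  have hle : stdInner l m ≤ 2 := stdInner_le_two hll hmm
  have hge : stdInner l (deltaE8 - m) ≤ 2 := stdInner_le_two hll hmm'
  rw [stdInner_sub_right, hlδ] at hge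
  rw [hk] at hle hge ⊢
  have : -1 ≤ k := by exact_mod_cast (by linarith : (-1 : ℚ) ≤ k)
  have : k ≤ 2 := by exact_mod_cast hle
  interval_cases k <;> simp

lemma exists_intCast_eq_iff_den_eq_one (q : ℚ) : (∃ n : ℤ, q = n) ↔ q.den = 1 :=
  ⟨by rintro ⟨n, rfl⟩; exact Rat.den_intCast n, fun h => ⟨q.num, ((Rat.den_eq_one_iff q).mp h).symm⟩⟩

instance : DecidablePred IsE8Root := fun v =>
  decidable_of_iff (stdInner v v = 2 ∧ ((∀ i, (v i).den = 1) ∨ ∀ i, (v i - 1/2).den = 1) ∧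
      ((∑ i, v i) / 2).den = 1) <| by
    simp only [IsE8Root, ← exists_intCast_eq_iff_den_eq_one, sub_eq_iff_eq_add,
      div_eq_iff (two_ne_zero (α := ℚ)), mul_comm (2 : ℚ)]

def intCandidates : Finset V8 := Fintype.piFinset fun _ => {-1, 0, 1}

def halfCandidates : Finset V8 := Fintype.piFinset fun _ => {-1/2, 1/2}

lemma mul_self_le_stdInner_self (v : V8) (i : Fin 8) : v i * v i ≤ stdInner v v :=
  Finset.single_le_sum (fun j _ => mul_self_nonneg (v j)) (Finset.mem_univ i)

lemma IsE8Root.mem_candidates {v : V8} (hv : IsE8Root v) :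
    v ∈ intCandidates ∨ v ∈ halfCandidates := by
  obtain ⟨hvv, hint | hhalf, -⟩ := hv
  · refine Or.inl (Fintype.mem_piFinset.mpr fun i => ?_)
    obtain ⟨n, hn⟩ := hint i
    have : n * n ≤ 2 := by exact_mod_cast hn ▸ hvv ▸ mul_self_le_stdInner_self v i
    have : -1 ≤ n := by nlinarith
    have : n ≤ 1 := by nlinarith
    interval_cases n <;> simp [hn]
  · -- each square is at least 1/4 and the eight of them sum to 2
    have hge : ∀ i, 1/4 ≤ v i * v i := fun i => by
      obtain ⟨n, hn⟩ := hhalf i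
      have : 0 ≤ n * (n + 1) := by rcases le_or_gt 0 n with h | h <;> nlinarith
      have : (0 : ℚ) ≤ n * (n + 1) := by exact_mod_cast this
      rw [hn]; nlinarith
    have hsum : ∑ i, (v i * v i - 1/4) = 0 := by
      rw [Finset.sum_sub_distrib, ← stdInner, hvv]; norm_num
    have hsq := (Finset.sum_eq_zero_iff_of_nonneg fun i _ => sub_nonneg.mpr (hge i)).mp hsum
    refine Or.inr (Fintype.mem_piFinset.mpr fun i => ?_)
    have : v i * v i = 1/2 * (1/2) := by linarith [hsq i (Finset.mem_univ i)]
    rcases mul_self_eq_mul_self_iff.mp this with h | h <;> norm_num [h]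

/-- The two candidate sets are filtered separately: a `Finset` union would compare all
`3⁸ · 2⁸` pairs when evaluated by the kernel. -/
def lambdaFinset : Finset V8 :=
  {v ∈ intCandidates | v 6 + v 7 = 1 ∧ IsE8Root v} ∪
    {v ∈ halfCandidates | v 6 + v 7 = 1 ∧ IsE8Root v}

lemma mem_lambdaFinset {v : V8} : v ∈ lambdaFinset ↔ v ∈ LambdaE7 := by
  rw [mem_lambdaE7_iff, stdInner_deltaE8, ← and_assoc, ← isE8Root_iff, lambdaFinset,
    Finset.mem_union, Finset.mem_filter, Finset.mem_filter]
  constructor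
  · rintro (⟨-, h, hv⟩ | ⟨-, h, hv⟩) <;> exact ⟨hv, h⟩
  · rintro ⟨hv, h⟩
    exact hv.mem_candidates.imp (⟨·, h, hv⟩) (⟨·, h, hv⟩)

lemma card_lambdaFinset : lambdaFinset.card = 56 := by
  decide +kernel

section Perp

variable {l : V8}

lemma filter_stdInner_eq_two (hl : l ∈ LambdaE7) :
    {m ∈ lambdaFinset | stdInner l m = 2} = {l} := by
  have hll := (mem_lambdaE7_iff.mp hl).1
  ext m
  simp only [Finset.mem_filter, Finset.mem_singleton, mem_lambdaFinset]
  refine ⟨fun ⟨hm, h⟩ => (eq_of_stdInner_eq_two hll (mem_lambdaE7_iff.mp hm).1 h).symm, ?_⟩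
  rintro rfl
  exact ⟨hl, hll⟩

lemma card_filter_stdInner_eq_one_sub (hl : l ∈ LambdaE7) (a : ℚ) :
    #{m ∈ lambdaFinset | stdInner l m = 1 - a} = #{m ∈ lambdaFinset | stdInner l m = a} := by
  have hlδ := (mem_lambdaE7_iff.mp hl).2.2
  have reflect : ∀ b, ∀ m ∈ {m ∈ lambdaFinset | stdInner l m = b},
      deltaE8 - m ∈ {m ∈ lambdaFinset | stdInner l m = 1 - b} := fun b m hm => by
    simp only [Finset.mem_filter, mem_lambdaFinset] at hm ⊢
    exact ⟨deltaE8_sub_mem_lambdaE7 hm.1, by rw [stdInner_sub_right, hlδ, hm.2]⟩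
  refine Finset.card_nbij' (deltaE8 - ·) (deltaE8 - ·) (fun m hm => ?_)
    (fun m hm => reflect a m hm) (fun m _ => sub_sub_cancel _ _) (fun m _ => sub_sub_cancel _ _)
  simpa using reflect (1 - a) m hm

lemma card_filter_stdInner_eq_zero (hl : l ∈ LambdaE7) :
    #{m ∈ lambdaFinset | stdInner l m = 0} = 27 := by
  have hmaps : Set.MapsTo (stdInner l) lambdaFinset ({-1, 0, 1, 2} : Finset ℚ) := fun m hm =>
    stdInner_mem_of_mem_lambdaE7 hl (mem_lambdaFinset.mp hm)
  have h := Finset.card_eq_sum_card_fiberwise hmaps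
  rw [Finset.sum_insert (by norm_num), Finset.sum_insert (by norm_num),
    Finset.sum_insert (by norm_num), Finset.sum_singleton, card_lambdaFinset,
    filter_stdInner_eq_two hl, Finset.card_singleton] at h
  have h₁ := card_filter_stdInner_eq_one_sub hl 0
  have h₂ := card_filter_stdInner_eq_one_sub hl 2
  norm_num [filter_stdInner_eq_two hl] at h₁ h₂
  omega

end Perp

def triadComplement (l r s : V8) : V8 := 2 • deltaE8 - l - r - s

section Triad

variable {l r s : V8}

lemma stdInner_triadComplement (x : V8) : stdInner x (triadComplement l r s) =
    2 * stdInner x deltaE8 - stdInner x l - stdInner x r - stdInner x s := by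
  rw [triadComplement, stdInner_sub_right, stdInner_sub_right, stdInner_sub_right,
    stdInner_nsmul_right, Nat.cast_ofNat]

lemma triadComplement_perp (hl : l ∈ LambdaE7) (hr : r ∈ LambdaE7) (hs : s ∈ LambdaE7)
    (hlr : stdInner l r = 0) (hls : stdInner l s = 0) (hrs : stdInner r s = 0) :
    stdInner l (triadComplement l r s) = 0 ∧ stdInner r (triadComplement l r s) = 0 ∧
      stdInner s (triadComplement l r s) = 0 := by
  obtain ⟨hll, -, hlδ⟩ := mem_lambdaE7_iff.mp hl
  obtain ⟨hrr, -, hrδ⟩ := mem_lambdaE7_iff.mp hr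
  obtain ⟨hss, -, hsδ⟩ := mem_lambdaE7_iff.mp hs
  simp only [stdInner_triadComplement, stdInner_comm r l, stdInner_comm s l, stdInner_comm s r,
    hll, hrr, hss, hlδ, hrδ, hsδ, hlr, hls, hrs]
  norm_num

lemma triadComplement_mem_lambdaE7 (hl : l ∈ LambdaE7) (hr : r ∈ LambdaE7) (hs : s ∈ LambdaE7)
    (hlr : stdInner l r = 0) (hls : stdInner l s = 0) (hrs : stdInner r s = 0) :
    triadComplement l r s ∈ LambdaE7 := by
  obtain ⟨-, hlL, hlδ⟩ := mem_lambdaE7_iff.mp hl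
  obtain ⟨-, hrL, hrδ⟩ := mem_lambdaE7_iff.mp hr
  obtain ⟨-, hsL, hsδ⟩ := mem_lambdaE7_iff.mp hs
  obtain ⟨hlτ, hrτ, hsτ⟩ := triadComplement_perp hl hr hs hlr hls hrs
  have hδτ : stdInner deltaE8 (triadComplement l r s) = 1 := by
    rw [stdInner_triadComplement, stdInner_deltaE8_self, stdInner_comm deltaE8 l,
      stdInner_comm deltaE8 r, stdInner_comm deltaE8 s, hlδ, hrδ, hsδ]
    norm_num
  refine mem_lambdaE7_iff.mpr ⟨?_, ?_, stdInner_comm _ _ ▸ hδτ⟩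
  · rw [stdInner_triadComplement, stdInner_comm _ deltaE8, stdInner_comm _ l, stdInner_comm _ r,
      stdInner_comm _ s, hδτ, hlτ, hrτ, hsτ]
    norm_num
  · exact sub_mem (sub_mem (sub_mem (nsmul_mem deltaE8_mem_e8Lattice 2) hlL) hrL) hsL

lemma perp_iff_eq_triadComplement (hl : l ∈ LambdaE7) (hr : r ∈ LambdaE7) (hs : s ∈ LambdaE7)
    (hlr : stdInner l r = 0) (hls : stdInner l s = 0) (hrs : stdInner r s = 0)
    {t : V8} (ht : t ∈ LambdaE7) :
    (stdInner l t = 0 ∧ stdInner r t = 0 ∧ stdInner s t = 0) ↔ t = triadComplement l r s := by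
  refine ⟨fun ⟨hlt, hrt, hst⟩ => ?_, fun h => h ▸ triadComplement_perp hl hr hs hlr hls hrs⟩
  obtain ⟨htt, -, htδ⟩ := mem_lambdaE7_iff.mp ht
  obtain ⟨hττ, -, -⟩ := mem_lambdaE7_iff.mp (triadComplement_mem_lambdaE7 hl hr hs hlr hls hrs)
  refine eq_of_stdInner_eq_two htt hττ ?_
  rw [stdInner_triadComplement, stdInner_comm t l, stdInner_comm t r, stdInner_comm t s, htδ, hlt,
    hrt, hst]
  norm_num

end Triad

/-- for λ ∈ Λ, the set {λ}^⊥ of weights of Λ orthogonal to λ has 27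
elements, and for any two distinct orthogonal ρ, σ ∈ {λ}^⊥ there is exactly one
τ ∈ {λ}^⊥ orthogonal to both ρ and σ. -/
theorem perp_triads :
    ∀ l ∈ LambdaE7,
      {m | m ∈ LambdaE7 ∧ nip l m = 0}.ncard = 27 ∧
      ∀ r ∈ {m | m ∈ LambdaE7 ∧ nip l m = 0},
        ∀ s ∈ {m | m ∈ LambdaE7 ∧ nip l m = 0},
          r ≠ s → nip r s = 0 →
            ∃! t, t ∈ {m | m ∈ LambdaE7 ∧ nip l m = 0} ∧ nip r t = 0 ∧ nip s t = 0 := by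
  intro l hl
  have hperp : {m | m ∈ LambdaE7 ∧ nip l m = 0} = ↑{m ∈ lambdaFinset | stdInner l m = 0} := by
    ext m
    simp [mem_lambdaFinset, nip_eq_zero_iff]
  refine ⟨by rw [hperp, Set.ncard_coe_finset, card_filter_stdInner_eq_zero hl], ?_⟩
  rintro r ⟨hr, hlr⟩ s ⟨hs, hls⟩ - hrs
  simp only [Set.mem_ofPred_eq, nip_eq_zero_iff] at hlr hls hrs ⊢
  have hτ := triadComplement_mem_lambdaE7 hl hr hs hlr hls hrs
  refine ⟨triadComplement l r s, ?_, fun t ⟨⟨ht, hlt⟩, hrt, hst⟩ => ?_⟩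
  · have := (perp_iff_eq_triadComplement hl hr hs hlr hls hrs hτ).mpr rfl
    exact ⟨⟨hτ, this.1⟩, this.2⟩
  · exact (perp_iff_eq_triadComplement hl hr hs hlr hls hrs ht).mp ⟨hlt, hrt, hst⟩
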